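/- arXiv:2505.01744 — 3 statements merged into one kernel-verified Lean document; each statement's English description precedes it below -/
import Mathlib

section
/- Let N be a positive integer, let g ∈ ℝ^{1×N} be a fixed row vector, and let v ∈ ℝ^N be a random vector whose coordinates are i.i.d. standard normal N(0,1). Then the mean squared error of the single-sample forward-gradient estimator satisfies E[‖(g v) vᵀ − g‖²] = (N+1)‖g‖², where ‖·‖ is the Euclidean norm on row vectors. -/
open MeasureTheory ProbabilityTheory Real
open scoped NNReal ENNReal

/-!
Write `S = ∑ i, g i * v i`. For independent standard Gaussians, `E[v^2] = 1` and `E[v^4] = 3`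
give the Wick formula `E[v_i v_k v_j^2] = δ_ik + 2 δ_ij δ_kj`, hence `E[(S v_j)^2] = ‖g‖^2 + 2 g_j^2`,
while `E[S v_j] = g_j`. So the `j`-th summand has mean `‖g‖^2 + g_j^2`, and summing over `j` gives
`(N + 1) ‖g‖^2`. The fourth moment comes from Stein's recursion `E[x^(n+2)] = (n+1) v E[x^n]`
for `N(0, v)`, obtained by integrating `x^(n+1)` by parts against the density.
-/

instance ENNReal.HolderTriple.two_mul_two_mul (p : ℝ≥0∞) : HolderTriple (2 * p) (2 * p) p where
  inv_add_inv_eq_inv := by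
    rw [← _root_.two_mul, ENNReal.mul_inv (by simp) (by simp), ← mul_assoc,
      ENNReal.mul_inv_cancel (by simp) (by simp), one_mul]

namespace ProbabilityTheory

lemma hasDerivAt_gaussianPDFReal (m : ℝ) (v : ℝ≥0) (x : ℝ) :
    HasDerivAt (gaussianPDFReal m v) (-((x - m) / v) * gaussianPDFReal m v x) x := by
  have hexponent : HasDerivAt (fun y => -(y - m) ^ 2 / (2 * v)) (-((x - m) / v)) x := by
    refine (((hasDerivAt_id' x).sub_const m).fun_pow 2).neg.div_const (2 * (v : ℝ))
      |>.congr_deriv ?_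
    rcases eq_or_ne (v : ℝ) 0 with hv | hv
    · simp [hv]
    · field_simp
      ring
  refine (hexponent.exp.const_mul (√(2 * π * v))⁻¹).congr_deriv ?_
  rw [gaussianPDFReal_def]
  ring

lemma integrable_gaussianPDFReal_smul_iff {E : Type*} [NormedAddCommGroup E] [NormedSpace ℝ E]
    {m : ℝ} {v : ℝ≥0} (hv : v ≠ 0) {f : ℝ → E} :
    Integrable (fun x => gaussianPDFReal m v x • f x) ↔ Integrable f (gaussianReal m v) := by
  rw [gaussianReal_of_var_ne_zero _ hv, integrable_withDensity_iff_integrable_smul'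
    (measurable_gaussianPDF m v) (ae_of_all _ fun _ => gaussianPDF_lt_top)]
  simp [gaussianPDF, ENNReal.toReal_ofReal (gaussianPDFReal_nonneg m v _)]

lemma integrable_pow_gaussianReal (m : ℝ) (v : ℝ≥0) (n : ℕ) :
    Integrable (fun x : ℝ => x ^ n) (gaussianReal m v) := by
  refine (memLp_id_gaussianReal (μ := m) (v := v) n).integrable_norm_pow'.mono'
    (by fun_prop) (ae_of_all _ fun x => ?_)
  simp

lemma integral_pow_add_two_gaussianReal (v : ℝ≥0) (n : ℕ) :
    ∫ x, x ^ (n + 2) ∂gaussianReal 0 v = (n + 1) * v * ∫ x, x ^ n ∂gaussianReal 0 v := by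
  rcases eq_or_ne v 0 with rfl | hv
  · simp [gaussianReal_zero_var]
  have hint (k : ℕ) : Integrable (fun x => gaussianPDFReal 0 v x • x ^ k) :=
    (integrable_gaussianPDFReal_smul_iff hv).2 (integrable_pow_gaussianReal 0 v k)
  have hderiv (x : ℝ) : HasDerivAt (fun y => -(v * (gaussianPDFReal 0 v y • y ^ (n + 1))))
      (gaussianPDFReal 0 v x • x ^ (n + 2) - (n + 1) * v * (gaussianPDFReal 0 v x • x ^ n)) x := by
    refine (((hasDerivAt_gaussianPDFReal 0 v x).mul (hasDerivAt_pow (n + 1) x)).const_mul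
      (v : ℝ)).neg.congr_deriv ?_
    have : (v : ℝ) ≠ 0 := by exact_mod_cast hv
    simp only [smul_eq_mul, sub_zero]
    field_simp
    push_cast
    ring
  have := integral_eq_zero_of_hasDerivAt_of_integrable hderiv
    ((hint (n + 2)).sub ((hint n).const_mul _)) ((hint (n + 1)).const_mul _).neg
  rw [integral_sub (hint _) ((hint n).const_mul _), integral_const_mul, sub_eq_zero] at this
  rwa [integral_gaussianReal_eq_integral_smul hv, integral_gaussianReal_eq_integral_smul hv]

lemma integral_sq_gaussianReal_zero (v : ℝ≥0) : ∫ x, x ^ 2 ∂gaussianReal 0 v = v := by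
  simpa using integral_pow_add_two_gaussianReal v 0

lemma integral_pow_four_gaussianReal_zero (v : ℝ≥0) :
    ∫ x, x ^ 4 ∂gaussianReal 0 v = 3 * v ^ 2 := by
  rw [integral_pow_add_two_gaussianReal v 2, integral_sq_gaussianReal_zero]
  ring

lemma iIndepFun.integral_comp_mul_comp {ι Ω : Type*} [MeasurableSpace Ω] {μ : Measure Ω}
    {X : ι → Ω → ℝ} (hindep : iIndepFun X μ) (hX : ∀ i, AEMeasurable (X i) μ)
    {i j k : ι} (hik : i ≠ k) (hjk : j ≠ k) {f : ℝ × ℝ → ℝ} {h : ℝ → ℝ}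
    (hf : Measurable f) (hh : Measurable h) :
    ∫ ω, f (X i ω, X j ω) * h (X k ω) ∂μ = (∫ ω, f (X i ω, X j ω) ∂μ) * ∫ ω, h (X k ω) ∂μ :=
  ((hindep.indepFun_prodMk₀ hX i j k hik hjk).comp hf hh).integral_fun_mul_eq_mul_integral
    (hf.comp_aemeasurable ((hX i).prodMk (hX j))).aestronglyMeasurable
    (hh.comp_aemeasurable (hX k)).aestronglyMeasurable

structure IsIIDStdGaussian {ι Ω : Type*} [MeasurableSpace Ω] (X : ι → Ω → ℝ) (μ : Measure Ω) :
    Prop where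
  indep : iIndepFun X μ
  hasLaw : ∀ i, HasLaw (X i) (gaussianReal 0 1) μ

namespace IsIIDStdGaussian

variable {ι Ω : Type*} [MeasurableSpace Ω] {μ : Measure Ω} {X : ι → Ω → ℝ}

lemma aemeasurable (hX : IsIIDStdGaussian X μ) (i : ι) : AEMeasurable (X i) μ :=
  (hX.hasLaw i).aemeasurable

lemma integral_pow (hX : IsIIDStdGaussian X μ) (i : ι) (n : ℕ) :
    ∫ ω, X i ω ^ n ∂μ = ∫ x, x ^ n ∂gaussianReal 0 1 :=
  (hX.hasLaw i).integral_comp (f := fun x => x ^ n) (by fun_prop)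

lemma memLp (hX : IsIIDStdGaussian X μ) (i : ι) {p : ℝ≥0∞} (hp : p ≠ ∞) : MemLp (X i) p μ := by
  have := memLp_id_gaussianReal' (μ := 0) (v := 1) p hp
  rw [← (hX.hasLaw i).map_eq] at this
  exact this.comp_of_map (hX.aemeasurable i)

lemma memLp_mul (hX : IsIIDStdGaussian X μ) (i k : ι) :
    MemLp (fun ω => X i ω * X k ω) 2 μ :=
  (hX.memLp k (p := 2 * 2) (by norm_num)).mul' (hX.memLp i (p := 2 * 2) (by norm_num))

lemma integrable_mul [IsFiniteMeasure μ] (hX : IsIIDStdGaussian X μ) (i k : ι) :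
    Integrable (fun ω => X i ω * X k ω) μ :=
  (hX.memLp_mul i k).integrable one_le_two

lemma integrable_mul_mul_sq (hX : IsIIDStdGaussian X μ) (i k j : ι) :
    Integrable (fun ω => X i ω * X k ω * X j ω ^ 2) μ := by
  simpa only [sq] using memLp_one_iff_integrable.1 <|
    (hX.memLp_mul j j).mul' (hX.memLp_mul i k)

lemma integral_eq_zero (hX : IsIIDStdGaussian X μ) (i : ι) : ∫ ω, X i ω ∂μ = 0 := by
  simpa using hX.integral_pow i 1

lemma integral_mul [DecidableEq ι] (hX : IsIIDStdGaussian X μ) (i k : ι) :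
    ∫ ω, X i ω * X k ω ∂μ = if i = k then 1 else 0 := by
  split_ifs with hik
  · subst hik
    simp_rw [← sq, hX.integral_pow, integral_sq_gaussianReal_zero, NNReal.coe_one]
  · simpa [hX.integral_eq_zero] using hX.indep.integral_comp_mul_comp hX.aemeasurable hik hik
      (f := Prod.fst) (h := id) measurable_fst measurable_id

lemma integral_mul_sq_mul_of_ne (hX : IsIIDStdGaussian X μ) {a b c : ι} (hac : a ≠ c)
    (hbc : b ≠ c) : ∫ ω, X a ω * X b ω ^ 2 * X c ω ∂μ = 0 := by
  simpa [hX.integral_eq_zero] using hX.indep.integral_comp_mul_comp hX.aemeasurable hac hbc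
    (f := fun p => p.1 * p.2 ^ 2) (by fun_prop) measurable_id

lemma integral_mul_mul_sq [DecidableEq ι] (hX : IsIIDStdGaussian X μ) (i k j : ι) :
    ∫ ω, X i ω * X k ω * X j ω ^ 2 ∂μ = if i = k then (if i = j then 3 else 1) else 0 := by
  by_cases hik : i = k
  · subst hik
    by_cases hij : i = j
    · subst hij
      have hpow (ω : Ω) : X i ω * X i ω * X i ω ^ 2 = X i ω ^ 4 := by ring
      simp_rw [hpow, hX.integral_pow, integral_pow_four_gaussianReal_zero]
      norm_num
    · rw [hX.indep.integral_comp_mul_comp hX.aemeasurable hij hij (f := fun p => p.1 * p.2)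
        (by fun_prop) (h := (· ^ 2)) (by fun_prop), hX.integral_mul, hX.integral_pow,
        integral_sq_gaussianReal_zero]
      simp [hij]
  · rw [if_neg hik]
    by_cases hij : i = j
    · subst hij
      rw [← hX.integral_mul_sq_mul_of_ne hik hik]
      congr with ω
      ring
    · rw [← hX.integral_mul_sq_mul_of_ne (Ne.symm hik) (Ne.symm hij)]
      congr with ω
      ring

variable [Fintype ι]

lemma memLp_sum_mul (hX : IsIIDStdGaussian X μ) (g : ι → ℝ) (j : ι) :
    MemLp (fun ω => (∑ i, g i * X i ω) * X j ω) 2 μ := by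
  simp_rw [Finset.sum_mul, mul_assoc]
  exact memLp_finsetSum _ fun i _ => (hX.memLp_mul i j).const_mul (g i)

lemma integral_sum_mul [DecidableEq ι] [IsFiniteMeasure μ] (hX : IsIIDStdGaussian X μ)
    (g : ι → ℝ) (j : ι) : ∫ ω, (∑ i, g i * X i ω) * X j ω ∂μ = g j := by
  simp_rw [Finset.sum_mul, mul_assoc]
  rw [integral_finsetSum _ fun i _ => (hX.integrable_mul i j).const_mul (g i)]
  simp [integral_const_mul, hX.integral_mul]

lemma integral_sum_mul_sq [DecidableEq ι] (hX : IsIIDStdGaussian X μ) (g : ι → ℝ) (j : ι) :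
    ∫ ω, ((∑ i, g i * X i ω) * X j ω) ^ 2 ∂μ = ∑ i, g i ^ 2 + 2 * g j ^ 2 := by
  have hexpand (ω : Ω) : ((∑ i, g i * X i ω) * X j ω) ^ 2
      = ∑ i, ∑ k, g i * g k * (X i ω * X k ω * X j ω ^ 2) := by
    rw [mul_pow, sq, Finset.sum_mul_sum, Finset.sum_mul]
    simp only [Finset.sum_mul]
    refine Finset.sum_congr rfl fun i _ => Finset.sum_congr rfl fun k _ => ?_
    ring
  simp_rw [hexpand]
  rw [integral_finsetSum _ fun i _ => integrable_finsetSum _ fun k _ =>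
    (hX.integrable_mul_mul_sq i k j).const_mul _]
  simp_rw [integral_finsetSum _ fun k _ => (hX.integrable_mul_mul_sq _ k j).const_mul _,
    integral_const_mul, hX.integral_mul_mul_sq]
  have hdiag (i : ι) : (∑ k, g i * g k * if i = k then (if i = j then 3 else 1) else 0)
      = g i ^ 2 + if i = j then 2 * g j ^ 2 else 0 := by
    simp only [mul_ite, mul_zero, Finset.sum_ite_eq, Finset.mem_univ, if_true]
    split_ifs with hij
    · subst hij
      ring
    · ring
  rw [Finset.sum_congr rfl fun i _ => hdiag i, Finset.sum_add_distrib]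
  simp

lemma integrable_sum_mul_sub_sq [IsFiniteMeasure μ] (hX : IsIIDStdGaussian X μ) (g : ι → ℝ)
    (j : ι) : Integrable (fun ω => ((∑ i, g i * X i ω) * X j ω - g j) ^ 2) μ :=
  ((hX.memLp_sum_mul g j).sub (memLp_const (g j))).integrable_sq

lemma integral_sum_mul_sub_sq [DecidableEq ι] [IsProbabilityMeasure μ]
    (hX : IsIIDStdGaussian X μ) (g : ι → ℝ) (j : ι) :
    ∫ ω, ((∑ i, g i * X i ω) * X j ω - g j) ^ 2 ∂μ = ∑ i, g i ^ 2 + g j ^ 2 := by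
  have hY := hX.memLp_sum_mul g j
  have hexpand (y : ℝ) : (y - g j) ^ 2 = y ^ 2 - 2 * g j * y + g j ^ 2 := by ring
  simp_rw [hexpand]
  have hYsq := hY.integrable_sq
  have hYlin := (hY.integrable one_le_two).const_mul (2 * g j)
  rw [integral_add (hYsq.sub' hYlin) (integrable_const _), integral_sub hYsq hYlin,
    integral_const_mul, integral_const, hX.integral_sum_mul_sq, hX.integral_sum_mul]
  simp only [probReal_univ, one_smul]
  ring

end IsIIDStdGaussian
end ProbabilityTheory

theorem forward_gradient_single_sample_mse_general
    {N : ℕ}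
    {Ω : Type*} [MeasurableSpace Ω] (μ : Measure Ω) [IsProbabilityMeasure μ]
    (g : Fin N → ℝ) (v : Ω → Fin N → ℝ)
    (hindep : iIndepFun (fun i ω => v ω i) μ)
    (hgauss : ∀ i : Fin N, Measure.map (fun ω => v ω i) μ = gaussianReal 0 1) :
    ∫ ω, ∑ j : Fin N, ((∑ i : Fin N, g i * v ω i) * v ω j - g j) ^ 2 ∂μ
      = ((N : ℝ) + 1) * ∑ i : Fin N, (g i) ^ 2 := by
  have hv : IsIIDStdGaussian (fun i ω => v ω i) μ := ⟨hindep, fun i =>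
    ⟨.of_map_ne_zero (by rw [hgauss i]; exact IsProbabilityMeasure.ne_zero _), hgauss i⟩⟩
  rw [integral_finsetSum _ fun j _ => hv.integrable_sum_mul_sub_sq g j]
  simp_rw [hv.integral_sum_mul_sub_sq g]
  rw [Finset.sum_add_distrib, Finset.sum_const, Finset.card_univ, Fintype.card_fin, nsmul_eq_mul]
  ring

/-- For a fixed row vector `g ∈ ℝ^{1×N}` and a random vector `v ∈ ℝ^N`
with i.i.d. standard normal coordinates, the mean squared error of the single-sample
forward-gradient estimator satisfies `E[‖(g v) vᵀ − g‖²] = (N + 1) ‖g‖²`. -/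
theorem forward_gradient_single_sample_mse
    {N : ℕ} (hN : 0 < N)
    {Ω : Type*} [MeasurableSpace Ω] (μ : Measure Ω) [IsProbabilityMeasure μ]
    (g : Fin N → ℝ) (v : Ω → Fin N → ℝ) (hv : Measurable v)
    (hindep : iIndepFun (fun i ω => v ω i) μ)
    (hgauss : ∀ i : Fin N, Measure.map (fun ω => v ω i) μ = gaussianReal 0 1) :
    ∫ ω, ∑ j : Fin N, ((∑ i : Fin N, g i * v ω i) * v ω j - g j) ^ 2 ∂μ
      = ((N : ℝ) + 1) * ∑ i : Fin N, (g i) ^ 2 :=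
  forward_gradient_single_sample_mse_general μ g v hindep hgauss
end

section
/- Let p, q, r be positive integers, let G ∈ ℝ^{p×q} be a fixed matrix, and let P ∈ ℝ^{q×r} be a random matrix whose entries are i.i.d. normal N(0, 1/r). Then the mean squared Frobenius error of the low-rank estimator satisfies E[‖G P Pᵀ − G‖²] = ((q+1)/r) ‖G‖², where ‖·‖ denotes the Frobenius norm. -/
open MeasureTheory ProbabilityTheory Real Matrix
open scoped NNReal ENNReal Kronecker

/-!
Write the entries of `P` as an independent family `x = (X_{kt})` of `N(0, v)` variables,
`v = 1/r`. Each entry of `G P Pᵀ` is a quadratic form `xᵀ A x` with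
`A = (G i) e_jᵀ ⊗ I_r`. By Isserlis' theorem,
`E[X_a X_b X_c X_d] = v² (δ_ab δ_cd + δ_ac δ_bd + δ_ad δ_bc)`, so that
`E[xᵀ A x] = v tr A` and `Var[xᵀ A x] = v² (tr (A Aᵀ) + tr (A²))`. Here `v tr A = v r G_ij = G_ij`,
so the mean squared error is the sum of the variances `v² r (‖G_i‖² + G_ij²)`, which add up to
`(q + 1) / r ‖G‖²`. The moments `E X² = v` and `E X⁴ = 3 v²` come from differentiating the
moment generating function `exp (v t² / 2)` at `0`.
-/

lemma integral_pow_gaussianReal_eq_iteratedDeriv (v : ℝ≥0) (n : ℕ) :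
    ∫ x, x ^ n ∂gaussianReal 0 v = iteratedDeriv n (fun t ↦ rexp (v * t ^ 2 / 2)) 0 := by
  have h := iteratedDeriv_mgf_zero (X := id) (μ := gaussianReal 0 v) (by simp) n
  simp only [mgf_id_gaussianReal, zero_mul, zero_add] at h
  simp [h]

lemma deriv_mul_exp_half_mul_sq (v : ℝ) {g g' : ℝ → ℝ} (hg : ∀ t, HasDerivAt g (g' t) t) :
    deriv (fun t ↦ g t * rexp (v * t ^ 2 / 2))
      = fun t ↦ (g' t + v * t * g t) * rexp (v * t ^ 2 / 2) := by
  funext t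
  refine ((hg t).mul ((((hasDerivAt_id t).pow 2).const_mul v).div_const 2).exp).deriv.trans ?_
  simp only [Pi.pow_apply, id, Nat.cast_ofNat]
  ring

lemma integral_sq_gaussianReal (v : ℝ≥0) : ∫ x, x ^ 2 ∂gaussianReal 0 v = v := by
  have h := variance_id_gaussianReal (μ := 0) (v := v)
  rw [variance_eq_sub ((memLp_id_gaussianReal 2).mono_exponent (by norm_num))] at h
  simpa using h

lemma integral_pow_four_gaussianReal (v : ℝ≥0) :
    ∫ x, x ^ 4 ∂gaussianReal 0 v = 3 * (v : ℝ) ^ 2 := by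
  have d1 : deriv (fun t ↦ rexp (v * t ^ 2 / 2)) = fun t ↦ v * t * rexp (v * t ^ 2 / 2) := by
    simpa using deriv_mul_exp_half_mul_sq v fun t ↦ hasDerivAt_const t (1 : ℝ)
  have d2 : deriv (fun t ↦ v * t * rexp (v * t ^ 2 / 2))
      = fun t ↦ (v + v ^ 2 * t ^ 2) * rexp (v * t ^ 2 / 2) := by
    rw [deriv_mul_exp_half_mul_sq v fun t ↦ (hasDerivAt_id' t).const_mul (v : ℝ)]
    funext t
    ring
  have d3 : deriv (fun t ↦ (v + v ^ 2 * t ^ 2) * rexp (v * t ^ 2 / 2))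
      = fun t ↦ (3 * v ^ 2 * t + v ^ 3 * t ^ 3) * rexp (v * t ^ 2 / 2) := by
    rw [deriv_mul_exp_half_mul_sq v fun t ↦ ((hasDerivAt_pow 2 t).const_mul _).const_add _]
    funext t
    simp only [Nat.cast_ofNat]
    ring
  have d4 : deriv (fun t ↦ (3 * v ^ 2 * t + v ^ 3 * t ^ 3) * rexp (v * t ^ 2 / 2)) 0
      = 3 * (v : ℝ) ^ 2 := by
    rw [deriv_mul_exp_half_mul_sq v fun t ↦
      ((hasDerivAt_id' t).const_mul _).fun_add ((hasDerivAt_pow 3 t).const_mul _)]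
    simp
  rw [integral_pow_gaussianReal_eq_iteratedDeriv, iteratedDeriv_eq_iterate]
  simp only [Function.iterate_succ_apply, Function.iterate_zero_apply, d1, d2, d3, d4]

lemma ProbabilityTheory.HasLaw.integral_pow {Ω : Type*} [MeasurableSpace Ω] {μ : Measure Ω}
    {Y : Ω → ℝ} {ν : Measure ℝ} (hY : HasLaw Y ν μ) (n : ℕ) :
    ∫ ω, Y ω ^ n ∂μ = ∫ x, x ^ n ∂ν :=
  hY.integral_comp (f := fun x ↦ x ^ n) (by fun_prop)

lemma dotProduct_mulVec_self_eq_sum {ι : Type*} [Fintype ι] (A : Matrix ι ι ℝ) (x : ι → ℝ) :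
    x ⬝ᵥ A *ᵥ x = ∑ a, ∑ b, A a b * (x a * x b) := by
  simp only [dotProduct, mulVec, Finset.mul_sum]
  exact Finset.sum_congr rfl fun a _ ↦ Finset.sum_congr rfl fun b _ ↦ by ring

lemma sq_dotProduct_mulVec_self_eq_sum {ι : Type*} [Fintype ι] (A : Matrix ι ι ℝ) (x : ι → ℝ) :
    (x ⬝ᵥ A *ᵥ x) ^ 2 = ∑ a, ∑ b, ∑ c, ∑ d, A a b * A c d * (x a * x b * x c * x d) := by
  rw [dotProduct_mulVec_self_eq_sum, sq, Finset.sum_mul_sum]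
  refine Finset.sum_congr rfl fun a _ ↦ ?_
  rw [Finset.sum_comm]
  simp_rw [Finset.sum_mul_sum]
  exact Finset.sum_congr rfl fun b _ ↦ Finset.sum_congr rfl fun c _ ↦
    Finset.sum_congr rfl fun d _ ↦ by ring

lemma sum_mul_mul_pairings_eq_trace {ι : Type*} [Fintype ι] [DecidableEq ι] (A : Matrix ι ι ℝ) :
    ∑ a, ∑ b, ∑ c, ∑ d, A a b * A c d * ((if a = b ∧ c = d then 1 else 0) +
      (if a = c ∧ b = d then 1 else 0) + (if a = d ∧ b = c then 1 else 0))
      = A.trace ^ 2 + (A * Aᵀ).trace + (A * A).trace := by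
  simp only [mul_add, Finset.sum_add_distrib, ite_and, mul_ite, mul_one, mul_zero,
    Finset.sum_ite_eq, Finset.mem_univ, if_true]
  simp [Matrix.trace, Matrix.mul_apply, sq, Finset.sum_mul_sum]

namespace GaussianFamily

variable {Ω ι : Type*} [MeasurableSpace Ω] {μ : Measure Ω} {X : ι → Ω → ℝ} {v : ℝ≥0}
  (hX : ∀ i, HasLaw (X i) (gaussianReal 0 v) μ)
include hX

lemma memLp_two_mul (a b : ι) : MemLp (fun ω ↦ X a ω * X b ω) 2 μ :=
  haveI : ENNReal.HolderTriple 4 4 2 := ⟨by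
    rw [← two_mul, show (4 : ℝ≥0∞) = 2 * 2 by norm_num, ENNReal.mul_inv (by simp) (by simp),
      ← mul_assoc, ENNReal.mul_inv_cancel (by simp) (by simp), one_mul]⟩
  ((hX b).hasGaussianLaw.memLp (p := 4) (by norm_num)).mul'
    ((hX a).hasGaussianLaw.memLp (p := 4) (by norm_num))

lemma integrable_mul_mul_mul (a b c d : ι) :
    Integrable (fun ω ↦ X a ω * X b ω * X c ω * X d ω) μ := by
  simpa only [Pi.mul_def, mul_assoc] using
    (memLp_two_mul hX a b).integrable_mul (memLp_two_mul hX c d)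

lemma memLp_two_dotProduct_mulVec [Fintype ι] (A : Matrix ι ι ℝ) :
    MemLp (fun ω ↦ (fun i ↦ X i ω) ⬝ᵥ A *ᵥ (fun i ↦ X i ω)) 2 μ := by
  simp_rw [dotProduct_mulVec_self_eq_sum]
  exact memLp_finsetSum _ fun a _ ↦ memLp_finsetSum _ fun b _ ↦ (memLp_two_mul hX a b).const_mul _

variable (hind : iIndepFun X μ)
include hind

lemma integral_mul_eq_ite [DecidableEq ι] (a b : ι) :
    ∫ ω, X a ω * X b ω ∂μ = if a = b then (v : ℝ) else 0 := by
  split_ifs with hab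
  · subst hab
    simp_rw [← sq, (hX a).integral_pow, integral_sq_gaussianReal]
  · rw [← Pi.mul_def, (hind.indepFun hab).integral_mul_eq_mul_integral
      (hX a).aemeasurable.aestronglyMeasurable (hX b).aemeasurable.aestronglyMeasurable,
      (hX a).integral_eq, integral_id_gaussianReal, zero_mul]

lemma integral_sq_mul_sq {a b : ι} (hab : a ≠ b) :
    ∫ ω, X a ω ^ 2 * X b ω ^ 2 ∂μ = (v : ℝ) ^ 2 := by
  have h : IndepFun (fun ω ↦ X a ω ^ 2) (fun ω ↦ X b ω ^ 2) μ :=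
    (hind.indepFun hab).comp (measurable_id.pow_const 2) (measurable_id.pow_const 2)
  rw [h.integral_fun_mul_eq_mul_integral ((hX a).aemeasurable.pow_const 2).aestronglyMeasurable
    ((hX b).aemeasurable.pow_const 2).aestronglyMeasurable, (hX a).integral_pow,
    (hX b).integral_pow, integral_sq_gaussianReal, sq]

lemma integral_mul_mul_mul_eq_zero {a b c d : ι} (hab : a ≠ b) (hac : a ≠ c) (had : a ≠ d) :
    ∫ ω, X a ω * X b ω * X c ω * X d ω ∂μ = 0 := by
  classical
  have h : IndepFun (X a) (fun ω ↦ X b ω * (X c ω * X d ω)) μ := by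
    have := hind.indepFun_finset₀ {a} {b, c, d} (by simp [hab, hac, had])
      fun i ↦ (hX i).aemeasurable
    refine this.comp (φ := fun y ↦ y ⟨a, by simp⟩)
      (ψ := fun y ↦ y ⟨b, by simp⟩ * (y ⟨c, by simp⟩ * y ⟨d, by simp⟩)) ?_ ?_ <;> fun_prop
  simp_rw [mul_assoc]
  rw [h.integral_fun_mul_eq_mul_integral (hX a).aemeasurable.aestronglyMeasurable
    (((hX b).aemeasurable.mul ((hX c).aemeasurable.mul (hX d).aemeasurable)).aestronglyMeasurable),
    (hX a).integral_eq, integral_id_gaussianReal, zero_mul]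

lemma integral_mul_mul_mul_eq [DecidableEq ι] (a b c d : ι) :
    ∫ ω, X a ω * X b ω * X c ω * X d ω ∂μ = (v : ℝ) ^ 2 *
      ((if a = b ∧ c = d then 1 else 0) + (if a = c ∧ b = d then 1 else 0) +
        (if a = d ∧ b = c then 1 else 0)) := by
  have single {a b c d : ι} (hab : a ≠ b) (hac : a ≠ c) (had : a ≠ d) :=
    integral_mul_mul_mul_eq_zero hX hind hab hac had
  have pair {a b : ι} (hab : a ≠ b) := integral_sq_mul_sq hX hind hab
  -- Either some index occurs exactly once, and the moment vanishes, or the indices pair up.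
  rcases eq_or_ne a b with rfl | hab
  · rcases eq_or_ne c d with rfl | hcd
    · rcases eq_or_ne a c with rfl | hac
      · convert (hX a).integral_pow 4 using 1
        · congr 1; ext ω; ring
        · rw [integral_pow_four_gaussianReal]; simp only [and_self, if_true]; ring
      · convert pair hac using 1
        · congr 1; ext ω; ring
        · simp [hac]
    · rcases eq_or_ne c a with rfl | hca
      · convert single hcd.symm hcd.symm hcd.symm using 1
        · congr 1; ext ω; ring
        · simp [hcd]
      · convert single hca hca hcd using 1
        · congr 1; ext ω; ring
        · simp [hcd, hca.symm]
  · rcases eq_or_ne a c with rfl | hac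
    · rcases eq_or_ne b d with rfl | hbd
      · convert pair hab using 1
        · congr 1; ext ω; ring
        · simp [hab, hab.symm]
      · convert single hab.symm hab.symm hbd using 1
        · congr 1; ext ω; ring
        · simp [hab, hab.symm, hbd]
    · rcases eq_or_ne a d with rfl | had
      · rcases eq_or_ne b c with rfl | hbc
        · convert pair hab using 1
          · congr 1; ext ω; ring
          · simp [hab, hab.symm]
        · convert single hab.symm hbc hab.symm using 1
          · congr 1; ext ω; ring
          · simp [hab, hac, hbc]
      · rw [single hab hac had]
        simp [hab, hac, had]

variable [Fintype ι] [DecidableEq ι] (A : Matrix ι ι ℝ)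

lemma integral_dotProduct_mulVec [IsFiniteMeasure μ] :
    ∫ ω, (fun i ↦ X i ω) ⬝ᵥ A *ᵥ (fun i ↦ X i ω) ∂μ = v * A.trace := by
  have hint (a b : ι) : Integrable (fun ω ↦ A a b * (X a ω * X b ω)) μ :=
    ((memLp_two_mul hX a b).integrable one_le_two).const_mul _
  simp_rw [dotProduct_mulVec_self_eq_sum]
  rw [integral_finsetSum _ fun a _ ↦ integrable_finsetSum _ fun b _ ↦ hint a b]
  simp_rw [integral_finsetSum _ fun b _ ↦ hint _ b, integral_const_mul,
    integral_mul_eq_ite hX hind]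
  simp [Matrix.trace, Finset.mul_sum, mul_comm]

lemma integral_sq_dotProduct_mulVec :
    ∫ ω, ((fun i ↦ X i ω) ⬝ᵥ A *ᵥ (fun i ↦ X i ω)) ^ 2 ∂μ
      = v ^ 2 * (A.trace ^ 2 + (A * Aᵀ).trace + (A * A).trace) := by
  have hint (a b c d : ι) :
      Integrable (fun ω ↦ A a b * A c d * (X a ω * X b ω * X c ω * X d ω)) μ :=
    (integrable_mul_mul_mul hX a b c d).const_mul _
  simp_rw [sq_dotProduct_mulVec_self_eq_sum]
  rw [integral_finsetSum _ fun a _ ↦ integrable_finsetSum _ fun b _ ↦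
    integrable_finsetSum _ fun c _ ↦ integrable_finsetSum _ fun d _ ↦ hint a b c d]
  simp_rw [integral_finsetSum _ fun b _ ↦ integrable_finsetSum _ fun c _ ↦
    integrable_finsetSum _ fun d _ ↦ hint _ b c d]
  simp_rw [integral_finsetSum _ fun c _ ↦ integrable_finsetSum _ fun d _ ↦ hint _ _ c d]
  simp_rw [integral_finsetSum _ fun d _ ↦ hint _ _ _ d, integral_const_mul,
    integral_mul_mul_mul_eq hX hind, mul_left_comm _ ((v : ℝ) ^ 2), ← Finset.mul_sum,
    sum_mul_mul_pairings_eq_trace]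

lemma variance_dotProduct_mulVec [IsProbabilityMeasure μ] :
    Var[fun ω ↦ (fun i ↦ X i ω) ⬝ᵥ A *ᵥ (fun i ↦ X i ω); μ]
      = v ^ 2 * ((A * Aᵀ).trace + (A * A).trace) := by
  rw [variance_eq_sub (memLp_two_dotProduct_mulVec hX A)]
  simp only [Pi.pow_apply]
  rw [integral_sq_dotProduct_mulVec hX hind, integral_dotProduct_mulVec hX hind]
  ring

end GaussianFamily

lemma mul_mul_transpose_apply_eq_dotProduct_mulVec {m n l : Type*} [Fintype n] [Fintype l]
    [DecidableEq n] [DecidableEq l] (G : Matrix m n ℝ) (P : Matrix n l ℝ) (i : m) (j : n) :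
    (G * P * Pᵀ) i j = (fun kt : n × l ↦ P kt.1 kt.2) ⬝ᵥ
      (vecMulVec (G i) (Pi.single j 1) ⊗ₖ (1 : Matrix l l ℝ)) *ᵥ (fun kt ↦ P kt.1 kt.2) := by
  simp only [Matrix.mul_apply, transpose_apply, Finset.sum_mul, dotProduct, mulVec,
    kroneckerMap_apply, vecMulVec_apply, Pi.single_apply, mul_ite, mul_one, mul_zero, one_apply,
    ite_mul, zero_mul, Fintype.sum_prod_type, Finset.sum_ite_eq, Finset.mem_univ, if_true,
    Finset.sum_ite_eq']
  rw [Finset.sum_comm]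
  exact Finset.sum_congr rfl fun k _ ↦ Finset.sum_congr rfl fun t _ ↦ by ring

section GaussianSketch

variable {Ω m n l : Type*} [MeasurableSpace Ω] {μ : Measure Ω} [IsProbabilityMeasure μ]
  [Fintype n] [Fintype l] [DecidableEq n] [DecidableEq l] {v : ℝ≥0}
  (G : Matrix m n ℝ) {P : Ω → Matrix n l ℝ}
  (hP : ∀ kt : n × l, HasLaw (fun ω ↦ P ω kt.1 kt.2) (gaussianReal 0 v) μ)
  (hind : iIndepFun (fun kt : n × l ↦ fun ω ↦ P ω kt.1 kt.2) μ)
include hP hind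

lemma integral_mul_mul_transpose_apply (i : m) (j : n) :
    ∫ ω, (G * P ω * (P ω)ᵀ) i j ∂μ = v * Fintype.card l * G i j := by
  simp_rw [mul_mul_transpose_apply_eq_dotProduct_mulVec]
  rw [GaussianFamily.integral_dotProduct_mulVec hP hind]
  rw [trace_kronecker, trace_vecMulVec, dotProduct_single, mul_one, trace_one]
  ring

lemma variance_mul_mul_transpose_apply (i : m) (j : n) :
    Var[fun ω ↦ (G * P ω * (P ω)ᵀ) i j; μ]
      = v ^ 2 * Fintype.card l * (∑ k, G i k ^ 2 + G i j ^ 2) := by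
  simp_rw [mul_mul_transpose_apply_eq_dotProduct_mulVec]
  rw [GaussianFamily.variance_dotProduct_mulVec hP hind, ← kroneckerMap_transpose, transpose_one,
    ← mul_kronecker_mul, ← mul_kronecker_mul]
  simp only [transpose_vecMulVec, vecMulVec_mul_vecMulVec, dotProduct_single, Pi.single_eq_same,
    mul_one, one_smul, trace_kronecker, trace_vecMulVec, trace_one, single_dotProduct, one_mul,
    vecMulVec_smul, trace_smul, smul_eq_mul]
  simp only [dotProduct, sq]
  ring

lemma integral_sum_sq_mul_mul_transpose_sub [Fintype m] :
    ∫ ω, ∑ i, ∑ j, ((G * P ω * (P ω)ᵀ) i j - v * Fintype.card l * G i j) ^ 2 ∂μ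
      = v ^ 2 * Fintype.card l * (Fintype.card n + 1) * ∑ i, ∑ j, G i j ^ 2 := by
  have hmem (i : m) (j : n) : MemLp (fun ω ↦ (G * P ω * (P ω)ᵀ) i j) 2 μ := by
    simp_rw [mul_mul_transpose_apply_eq_dotProduct_mulVec]
    exact GaussianFamily.memLp_two_dotProduct_mulVec hP _
  have hint (i : m) (j : n) :
      Integrable (fun ω ↦ ((G * P ω * (P ω)ᵀ) i j - v * Fintype.card l * G i j) ^ 2) μ :=
    ((hmem i j).sub (memLp_const _)).integrable_sq
  rw [integral_finsetSum _ fun i _ ↦ integrable_finsetSum _ fun j _ ↦ hint i j]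
  simp_rw [integral_finsetSum _ fun j _ ↦ hint _ j, ← integral_mul_mul_transpose_apply G hP hind,
    ← variance_eq_integral (hmem _ _).aemeasurable, variance_mul_mul_transpose_apply G hP hind]
  simp only [← Finset.mul_sum, Finset.sum_add_distrib, Finset.sum_const, Finset.card_univ,
    nsmul_eq_mul]
  ring

end GaussianSketch

theorem low_rank_projection_mse_general
    {p q r : ℕ} (hr : 0 < r)
    {Ω : Type*} [MeasurableSpace Ω] (μ : Measure Ω) [IsProbabilityMeasure μ]
    (G : Matrix (Fin p) (Fin q) ℝ)
    (P : Ω → Matrix (Fin q) (Fin r) ℝ) (hP : ∀ ij : Fin q × Fin r, Measurable (fun ω => P ω ij.1 ij.2))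
    (hindep : iIndepFun
      (fun ij : Fin q × Fin r => fun ω => P ω ij.1 ij.2) μ)
    (hgauss : ∀ ij : Fin q × Fin r,
      Measure.map (fun ω => P ω ij.1 ij.2) μ = gaussianReal 0 (r : NNReal)⁻¹) :
    ∫ ω, ∑ i : Fin p, ∑ j : Fin q, ((G * P ω * (P ω)ᵀ) i j - G i j) ^ 2 ∂μ
      = (((q : ℝ) + 1) / (r : ℝ)) * ∑ i : Fin p, ∑ j : Fin q, (G i j) ^ 2 := by
  have hr' : (r : ℝ) ≠ 0 := Nat.cast_ne_zero.mpr hr.ne'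
  have h := integral_sum_sq_mul_mul_transpose_sub G
    (fun ij ↦ ⟨(hP ij).aemeasurable, hgauss ij⟩) hindep
  simp only [Fintype.card_fin, NNReal.coe_inv, NNReal.coe_natCast, inv_mul_cancel₀ hr',
    one_mul] at h
  rw [h]
  field_simp

/-- For a fixed matrix `G ∈ ℝ^{p×q}` and a random matrix `P ∈ ℝ^{q×r}`
with i.i.d. `N(0, 1/r)` entries, the mean squared Frobenius error of the low-rank
estimator satisfies `E[‖G P Pᵀ − G‖²] = ((q+1)/r) ‖G‖²`. -/
theorem low_rank_projection_mse
    {p q r : ℕ} (hp : 0 < p) (hq : 0 < q) (hr : 0 < r)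
    {Ω : Type*} [MeasurableSpace Ω] (μ : Measure Ω) [IsProbabilityMeasure μ]
    (G : Matrix (Fin p) (Fin q) ℝ)
    (P : Ω → Matrix (Fin q) (Fin r) ℝ) (hP : ∀ ij : Fin q × Fin r, Measurable (fun ω => P ω ij.1 ij.2))
    (hindep : iIndepFun
      (fun ij : Fin q × Fin r => fun ω => P ω ij.1 ij.2) μ)
    (hgauss : ∀ ij : Fin q × Fin r,
      Measure.map (fun ω => P ω ij.1 ij.2) μ = gaussianReal 0 (r : NNReal)⁻¹) :
    ∫ ω, ∑ i : Fin p, ∑ j : Fin q, ((G * P ω * (P ω)ᵀ) i j - G i j) ^ 2 ∂μ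
      = (((q : ℝ) + 1) / (r : ℝ)) * ∑ i : Fin p, ∑ j : Fin q, (G i j) ^ 2 :=
  low_rank_projection_mse_general hr μ G P hP hindep hgauss
end

section
/- (Theorem 5.1, part 1, for the system with an orthogonal projection P Pᵀ = I, equivalently the gradient-driven case) Let p, q be positive integers and let 𝓛 : ℝ^{p×q} → ℝ be continuously differentiable. Let a, b, R > 0 satisfy 4a ≥ (R+1)b. Let W : [0,∞) → ℝ^{p×q}, m : [0,∞) → ℝ^{p×q}, v_r : [0,∞) → ℝ^p, v_c : [0,∞) → ℝ^{1×q} be continuously differentiable and satisfy, with G_t := ∇𝓛(W_t): (d/dt)m_t = a(G_t − m_t), (d/dt)v_r(t) = b((G_t)^{⊙2}𝟙_q − v_r(t)), (d/dt)v_c(t) = b(𝟙_pᵀ(G_t)^{⊙2} − v_c(t)), and (d/dt)W_t = − m_t ⊘ √(v̂_t), where v̂_t ∈ ℝ^{p×q} has entries (v̂_t)_{ij} = v_r(t)_i · v_c(t)_j / (Σ_k v_r(t)_k), ⊘ is entrywise division, and the square root is entrywise. Assume that for all t ≥ 0 every entry of v_r(t) and v_c(t) is strictly positive, and that ‖G_t‖²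 ≤ R ‖v_r(t)‖ (Frobenius/Euclidean norms). Define the Lyapunov function H(t) := 𝓛(W_t) + (1/(2a)) ⟨m_t, m_t ⊘ √(v̂_t)⟩. Then for all t ≥ 0, (d/dt)H(t) ≤ −(1 − (R+1)b/(4a)) ⟨m_t ⊘ √(v̂_t), m_t⟩ ≤ 0; in particular H is nonincreasing along the trajectory. -/
open Matrix

attribute [local instance] Matrix.normedAddCommGroup Matrix.normedSpace

/-- The continuous linear map `H ↦ ⟨A, H⟩_F = Σᵢⱼ Aᵢⱼ Hᵢⱼ` (Frobenius pairing with `A`);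
`HasFDerivAt 𝓛 (frobCLM A) X` says `𝓛` is differentiable at `X` with gradient `A`. -/
noncomputable def frobCLM {n m : ℕ} (A : Matrix (Fin n) (Fin m) ℝ) :
    Matrix (Fin n) (Fin m) ℝ →L[ℝ] ℝ :=
  LinearMap.toContinuousLinearMap
    { toFun := fun H => ∑ i : Fin n, ∑ j : Fin m, A i j * H i j
      map_add' := fun X Y => by
        simp [Matrix.add_apply, mul_add, Finset.sum_add_distrib]
      map_smul' := fun c X => by
        simp [Matrix.smul_apply, smul_eq_mul, Finset.mul_sum, mul_left_comm] }

open Real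

/-! Along the flow the gradient terms cancel, leaving
`H' = -⟨m ⊘ √v̂, m⟩ - (1/(4a)) Σᵢⱼ (m²/√v̂)ᵢⱼ (v̂'/v̂)ᵢⱼ`. The logarithmic derivative of
`v̂ᵢⱼ = v_r,i v_c,j / 𝟙ᵀv_r` is at least `-b - b - (R - 1)b`: an exponential moving average
towards a nonnegative target decays at rate at most `b`, and `‖G‖² ≤ R‖v_r‖ ≤ R 𝟙ᵀv_r` caps the
growth rate of `𝟙ᵀv_r` by `(R - 1)b`. -/

lemma div_sqrt_mul_self_nonneg (x v : ℝ) : 0 ≤ x / √v * x := by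
  rw [div_mul_eq_mul_div]
  exact div_nonneg (mul_self_nonneg x) (sqrt_nonneg v)

lemma sqrt_sum_sq_le_sum {ι : Type*} (s : Finset ι) {f : ι → ℝ} (hf : ∀ i ∈ s, 0 ≤ f i) :
    √(∑ i ∈ s, f i ^ 2) ≤ ∑ i ∈ s, f i :=
  (sqrt_le_left (Finset.sum_nonneg hf)).2 (Finset.sum_sq_le_sq_sum_of_nonneg hf)

lemma mul_div_deriv_ge {x y S x' y' S' α β γ : ℝ} (hx : 0 < x) (hy : 0 < y) (hS : 0 < S)
    (hx' : -α * x ≤ x') (hy' : -β * y ≤ y') (hS' : S' ≤ γ * S) :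
    -(α + β + γ) * (x * y / S) ≤ ((x' * y + x * y') * S - x * y * S') / S ^ 2 := by
  rw [le_div_iff₀ (by positivity), mul_assoc, show x * y / S * S ^ 2 = x * y * S by field_simp]
  nlinarith [mul_le_mul_of_nonneg_right hx' (mul_pos hy hS).le,
    mul_le_mul_of_nonneg_right hy' (mul_pos hx hS).le,
    mul_le_mul_of_nonneg_left hS' (mul_pos hx hy).le]

lemma HasDerivAt.mul_div_sqrt {x v : ℝ → ℝ} {x' v' t : ℝ} (hx : HasDerivAt x x' t)
    (hv : HasDerivAt v v' t) (hv₀ : 0 < v t) :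
    HasDerivAt (fun s => x s * (x s / √(v s)))
      (x t / √(v t) * (2 * x' - x t * v' / (2 * v t))) t := by
  have hsqrt₀ : 0 < √(v t) := sqrt_pos.2 hv₀
  refine (hx.mul (hx.fun_div (hv.sqrt hv₀.ne') hsqrt₀.ne')).congr_deriv ?_
  field_simp
  rw [sq_sqrt hv₀.le]
  ring

lemma lyapunov_entry_le {a c g x v d : ℝ} (ha : 0 < a) (hv : 0 < v) (hd : -c * v ≤ d) :
    g * -(x / √v) + 1 / (2 * a) * (x / √v * (2 * (a * (g - x)) - x * d / (2 * v)))
      ≤ -(1 - c / (4 * a)) * (x / √v * x) := by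
  have hdv : -c ≤ d / v := (le_div_iff₀ hv).2 hd
  have hlhs : g * -(x / √v) + 1 / (2 * a) * (x / √v * (2 * (a * (g - x)) - x * d / (2 * v)))
      = -(x / √v * x) - x / √v * x * (d / v) / (4 * a) := by
    field_simp
    ring
  have hgap : -(1 - c / (4 * a)) * (x / √v * x) - (-(x / √v * x) - x / √v * x * (d / v) / (4 * a))
      = x / √v * x * (c + d / v) / (4 * a) := by
    field_simp
    ring
  have : 0 ≤ x / √v * x * (c + d / v) / (4 * a) :=
    div_nonneg (mul_nonneg (div_sqrt_mul_self_nonneg x v) (by linarith)) (by positivity)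
  linarith

lemma antitoneOn_Ici_of_hasDerivAt_nonpos {f : ℝ → ℝ} {x₀ : ℝ}
    (h : ∀ x, x₀ ≤ x → ∃ f', HasDerivAt f f' x ∧ f' ≤ 0) : AntitoneOn f (Set.Ici x₀) := by
  choose! f' hf hf' using h
  refine antitoneOn_of_deriv_nonpos (convex_Ici x₀)
    (fun x hx => (hf x hx).continuousAt.continuousWithinAt) ?_ ?_ <;> rw [interior_Ici]
  · exact fun x hx => (hf x (le_of_lt hx)).differentiableAt.differentiableWithinAt
  · exact fun x hx => (hf x (le_of_lt hx)).deriv ▸ hf' x (le_of_lt hx)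

lemma exists_hasDerivAt_rankOne_ge {p q : ℕ} {vr : ℝ → Fin p → ℝ} {vc : ℝ → Fin q → ℝ}
    {G : Matrix (Fin p) (Fin q) ℝ} {b R t : ℝ} (hb : 0 ≤ b) (hR : 0 ≤ R)
    (hvr' : ∀ i, HasDerivAt (fun s => vr s i) (b * ((∑ j, G i j ^ 2) - vr t i)) t)
    (hvc' : ∀ j, HasDerivAt (fun s => vc s j) (b * ((∑ i, G i j ^ 2) - vc t j)) t)
    (hvr : ∀ i, 0 < vr t i) (hvc : ∀ j, 0 < vc t j)
    (hG : ∑ i, ∑ j, G i j ^ 2 ≤ R * √(∑ i, vr t i ^ 2)) (i : Fin p) (j : Fin q) :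
    ∃ d, HasDerivAt (fun s => vr s i * vc s j / ∑ k, vr s k) d t ∧
      -((R + 1) * b) * (vr t i * vc t j / ∑ k, vr t k) ≤ d := by
  have hS : 0 < ∑ k, vr t k := Finset.sum_pos (fun k _ => hvr k) ⟨i, Finset.mem_univ i⟩
  refine ⟨_, ((hvr' i).mul (hvc' j)).div (HasDerivAt.fun_sum fun k _ => hvr' k) hS.ne', ?_⟩
  have hGS : ∑ i, ∑ j, G i j ^ 2 ≤ R * ∑ k, vr t k :=
    hG.trans (mul_le_mul_of_nonneg_left
      (sqrt_sum_sq_le_sum _ fun k _ => (hvr k).le) hR)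
  have hS' : ∑ k, b * ((∑ j, G k j ^ 2) - vr t k) ≤ (R - 1) * b * ∑ k, vr t k := by
    rw [← Finset.mul_sum, Finset.sum_sub_distrib]
    nlinarith
  have hvr_decay : -b * vr t i ≤ b * ((∑ j, G i j ^ 2) - vr t i) := by
    nlinarith [mul_nonneg hb (Finset.sum_nonneg fun j (_ : j ∈ Finset.univ) => sq_nonneg (G i j))]
  have hvc_decay : -b * vc t j ≤ b * ((∑ i, G i j ^ 2) - vc t j) := by
    nlinarith [mul_nonneg hb (Finset.sum_nonneg fun i (_ : i ∈ Finset.univ) => sq_nonneg (G i j))]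
  convert mul_div_deriv_ge (hvr i) (hvc j) hS hvr_decay hvc_decay hS' using 1
  · ring
  · simp only [Pi.mul_apply]

lemma exists_hasDerivAt_lyapunov_le {p q : ℕ} {𝓛 : Matrix (Fin p) (Fin q) ℝ → ℝ}
    {W m vhat : ℝ → Matrix (Fin p) (Fin q) ℝ} {G : Matrix (Fin p) (Fin q) ℝ} {a c t : ℝ}
    (hL : HasFDerivAt 𝓛 (frobCLM G) (W t)) (ha : 0 < a)
    (hm' : ∀ i j, HasDerivAt (fun s => m s i j) (a * (G i j - m t i j)) t)
    (hW' : ∀ i j, HasDerivAt (fun s => W s i j) (-(m t i j / √(vhat t i j))) t)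
    (hvhat' : ∀ i j, ∃ d, HasDerivAt (fun s => vhat s i j) d t ∧ -c * vhat t i j ≤ d)
    (hvhat : ∀ i j, 0 < vhat t i j) :
    ∃ H', HasDerivAt (fun s => 𝓛 (W s) + 1 / (2 * a) *
        ∑ i, ∑ j, m s i j * (m s i j / √(vhat s i j))) H' t ∧
      H' ≤ -(1 - c / (4 * a)) * ∑ i, ∑ j, m t i j / √(vhat t i j) * m t i j := by
  choose d hd hdc using hvhat'
  have hW : HasDerivAt W (fun i j => -(m t i j / √(vhat t i j))) t :=
    hasDerivAt_pi.2 fun i => hasDerivAt_pi.2 fun j => hW' i j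
  have hsum := HasDerivAt.fun_sum fun i (_ : i ∈ Finset.univ) => HasDerivAt.fun_sum
    fun j (_ : j ∈ Finset.univ) => (hm' i j).mul_div_sqrt (hd i j) (hvhat i j)
  refine ⟨_, (hL.comp_hasDerivAt t hW).add (hsum.const_mul (1 / (2 * a))), ?_⟩
  change ∑ i, ∑ j, G i j * -(m t i j / √(vhat t i j)) + _ ≤ _
  simp only [Finset.mul_sum, ← Finset.sum_add_distrib]
  gcongr with i _ j _
  exact lyapunov_entry_le ha (hvhat i j) (hdc i j)

theorem projfactor_lyapunov_descent_general
    (p q : ℕ)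
    (𝓛 : Matrix (Fin p) (Fin q) ℝ → ℝ)
    (gradf : Matrix (Fin p) (Fin q) ℝ → Matrix (Fin p) (Fin q) ℝ)
    (hgrad : ∀ X, HasFDerivAt 𝓛 (frobCLM (gradf X)) X)
    (a b R : ℝ) (ha : 0 < a) (hb : 0 < b) (hR : 0 < R)
    (hab : (R + 1) * b ≤ 4 * a)
    (W m : ℝ → Matrix (Fin p) (Fin q) ℝ)
    (vr : ℝ → Fin p → ℝ) (vc : ℝ → Fin q → ℝ)
    (vhat : ℝ → Matrix (Fin p) (Fin q) ℝ)
    (hvhat : ∀ t i j, vhat t i j = vr t i * vc t j / (∑ k : Fin p, vr t k))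
    (hm' : ∀ t : ℝ, 0 ≤ t → ∀ i j, HasDerivAt (fun s => m s i j)
      (a * (gradf (W t) i j - m t i j)) t)
    (hvr' : ∀ t : ℝ, 0 ≤ t → ∀ i, HasDerivAt (fun s => vr s i)
      (b * ((∑ j : Fin q, (gradf (W t) i j) ^ 2) - vr t i)) t)
    (hvc' : ∀ t : ℝ, 0 ≤ t → ∀ j, HasDerivAt (fun s => vc s j)
      (b * ((∑ i : Fin p, (gradf (W t) i j) ^ 2) - vc t j)) t)
    (hW' : ∀ t : ℝ, 0 ≤ t → ∀ i j, HasDerivAt (fun s => W s i j)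
      (-(m t i j / Real.sqrt (vhat t i j))) t)
    (hpos : ∀ t : ℝ, 0 ≤ t → (∀ i, 0 < vr t i) ∧ (∀ j, 0 < vc t j))
    (hbound : ∀ t : ℝ, 0 ≤ t →
      (∑ i : Fin p, ∑ j : Fin q, (gradf (W t) i j) ^ 2)
        ≤ R * Real.sqrt (∑ i : Fin p, (vr t i) ^ 2))
    (H : ℝ → ℝ)
    (hH : ∀ t, H t = 𝓛 (W t) + (1 / (2 * a)) *
      ∑ i : Fin p, ∑ j : Fin q, m t i j * (m t i j / Real.sqrt (vhat t i j))) :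
    (∀ t : ℝ, 0 ≤ t → ∃ H' : ℝ, HasDerivAt H H' t ∧
      H' ≤ -(1 - (R + 1) * b / (4 * a)) *
            ∑ i : Fin p, ∑ j : Fin q, (m t i j / Real.sqrt (vhat t i j)) * m t i j ∧
      -(1 - (R + 1) * b / (4 * a)) *
            ∑ i : Fin p, ∑ j : Fin q, (m t i j / Real.sqrt (vhat t i j)) * m t i j ≤ 0) ∧
    AntitoneOn H (Set.Ici (0 : ℝ)) := by
  have hdescent : 0 ≤ 1 - (R + 1) * b / (4 * a) := by
    rw [sub_nonneg, div_le_one (by positivity)]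
    exact hab
  refine (and_iff_left_of_imp fun key => antitoneOn_Ici_of_hasDerivAt_nonpos fun t ht =>
    (key t ht).imp fun _ h => ⟨h.1, h.2.1.trans h.2.2⟩).2 fun t ht => ?_
  obtain ⟨hvr, hvc⟩ := hpos t ht
  have hvhat_pos : ∀ i j, 0 < vhat t i j := fun i j => by
    rw [hvhat]
    exact div_pos (mul_pos (hvr i) (hvc j))
      (Finset.sum_pos (fun k _ => hvr k) ⟨i, Finset.mem_univ i⟩)
  have hvhat' : ∀ i j, ∃ d, HasDerivAt (fun s => vhat s i j) d t ∧
      -((R + 1) * b) * vhat t i j ≤ d := fun i j => by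
    simp only [hvhat]
    exact exists_hasDerivAt_rankOne_ge hb.le hR.le (hvr' t ht) (hvc' t ht) hvr hvc
      (hbound t ht) i j
  rw [show H = _ from funext hH]
  obtain ⟨H', hH', hle⟩ :=
    exists_hasDerivAt_lyapunov_le (hgrad (W t)) ha (hm' t ht) (hW' t ht) hvhat' hvhat_pos
  refine ⟨H', hH', hle, ?_⟩
  rw [neg_mul, neg_nonpos]
  exact mul_nonneg hdescent
    (Finset.sum_nonneg fun i _ => Finset.sum_nonneg fun j _ => div_sqrt_mul_self_nonneg _ _)

/-- **Theorem 5.1, part 1, gradient-driven case.** Along the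
continuous-time ProjFactor (Adafactor-type) dynamics
`dm/dt = a(G − m)`, `dv_r/dt = b(G^{⊙2}𝟙 − v_r)`, `dv_c/dt = b(𝟙ᵀG^{⊙2} − v_c)`,
`dW/dt = −m ⊘ √v̂` with `G = ∇𝓛(W)` and `v̂ = v_r v_c/(𝟙ᵀ v_r)`, if `4a ≥ (R+1)b`,
the entries of `v_r, v_c` stay positive and `‖G‖² ≤ R‖v_r‖`, then the Lyapunov function
`H = 𝓛(W) + (1/(2a))⟨m, m ⊘ √v̂⟩` satisfies
`dH/dt ≤ −(1 − (R+1)b/(4a))⟨m ⊘ √v̂, m⟩ ≤ 0`; in particular `H` is nonincreasing. -/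
theorem projfactor_lyapunov_descent
    (p q : ℕ) (hp : 0 < p) (hq : 0 < q)
    (𝓛 : Matrix (Fin p) (Fin q) ℝ → ℝ)
    (gradf : Matrix (Fin p) (Fin q) ℝ → Matrix (Fin p) (Fin q) ℝ)
    (hC1 : ContDiff ℝ 1 𝓛)
    (hgrad : ∀ X, HasFDerivAt 𝓛 (frobCLM (gradf X)) X)
    (a b R : ℝ) (ha : 0 < a) (hb : 0 < b) (hR : 0 < R)
    (hab : (R + 1) * b ≤ 4 * a)
    (W m : ℝ → Matrix (Fin p) (Fin q) ℝ)
    (vr : ℝ → Fin p → ℝ) (vc : ℝ → Fin q → ℝ)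
    (vhat : ℝ → Matrix (Fin p) (Fin q) ℝ)
    (hvhat : ∀ t i j, vhat t i j = vr t i * vc t j / (∑ k : Fin p, vr t k))
    (hm' : ∀ t : ℝ, 0 ≤ t → ∀ i j, HasDerivAt (fun s => m s i j)
      (a * (gradf (W t) i j - m t i j)) t)
    (hvr' : ∀ t : ℝ, 0 ≤ t → ∀ i, HasDerivAt (fun s => vr s i)
      (b * ((∑ j : Fin q, (gradf (W t) i j) ^ 2) - vr t i)) t)
    (hvc' : ∀ t : ℝ, 0 ≤ t → ∀ j, HasDerivAt (fun s => vc s j)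
      (b * ((∑ i : Fin p, (gradf (W t) i j) ^ 2) - vc t j)) t)
    (hW' : ∀ t : ℝ, 0 ≤ t → ∀ i j, HasDerivAt (fun s => W s i j)
      (-(m t i j / Real.sqrt (vhat t i j))) t)
    (hpos : ∀ t : ℝ, 0 ≤ t → (∀ i, 0 < vr t i) ∧ (∀ j, 0 < vc t j))
    (hbound : ∀ t : ℝ, 0 ≤ t →
      (∑ i : Fin p, ∑ j : Fin q, (gradf (W t) i j) ^ 2)
        ≤ R * Real.sqrt (∑ i : Fin p, (vr t i) ^ 2))
    (H : ℝ → ℝ)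
    (hH : ∀ t, H t = 𝓛 (W t) + (1 / (2 * a)) *
      ∑ i : Fin p, ∑ j : Fin q, m t i j * (m t i j / Real.sqrt (vhat t i j))) :
    (∀ t : ℝ, 0 ≤ t → ∃ H' : ℝ, HasDerivAt H H' t ∧
      H' ≤ -(1 - (R + 1) * b / (4 * a)) *
            ∑ i : Fin p, ∑ j : Fin q, (m t i j / Real.sqrt (vhat t i j)) * m t i j ∧
      -(1 - (R + 1) * b / (4 * a)) *
            ∑ i : Fin p, ∑ j : Fin q, (m t i j / Real.sqrt (vhat t i j)) * m t i j ≤ 0) ∧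
    AntitoneOn H (Set.Ici (0 : ℝ)) :=
  projfactor_lyapunov_descent_general p q 𝓛 gradf hgrad a b R ha hb hR hab W m vr vc vhat hvhat hm'
    hvr' hvc' hW' hpos hbound H hH
end
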